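/- arXiv:1810.02882 — 2 statements merged into one kernel-verified Lean document; each statement's English description precedes it below -/
import Mathlib

section
/- Let G be a connected graph of order n ≥ 2. If every vertex of G has a true twin, then ldim_f(G) ≥ n/2. -/
open scoped Classical
open Finset

namespace FracLocal

/-- The local resolving neighborhood of a (potential) edge `uv`:
vertices whose distances to `u` and `v` differ. -/
noncomputable def locRes {V : Type*} [Fintype V] (G : SimpleGraph V) (u v : V) : Finset V :=
  Finset.univ.filter (fun x => G.dist x u ≠ G.dist x v)

/-- A local resolving function: values in `[0,1]` summing to at least `1`
on every local resolving neighborhood of an edge. -/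
def IsLRF {V : Type*} [Fintype V] (G : SimpleGraph V) (f : V → ℝ) : Prop :=
  (∀ x, 0 ≤ f x ∧ f x ≤ 1) ∧ ∀ u v, G.Adj u v → 1 ≤ ∑ x ∈ locRes G u v, f x

/-- The fractional local metric dimension. -/
noncomputable def ldimf {V : Type*} [Fintype V] (G : SimpleGraph V) : ℝ :=
  sInf {w : ℝ | ∃ f : V → ℝ, IsLRF G f ∧ w = ∑ x, f x}

/-- The (integral) local metric dimension. -/
noncomputable def ldim {V : Type*} [Fintype V] (G : SimpleGraph V) : ℕ :=
  sInf {k : ℕ | ∃ S : Finset V, S.card = k ∧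
    ∀ u v, G.Adj u v → (S ∩ locRes G u v).Nonempty}

/-- `l(G)`: the minimum cardinality of a local resolving neighborhood of an edge. -/
noncomputable def lG {V : Type*} [Fintype V] (G : SimpleGraph V) : ℕ :=
  sInf {k : ℕ | ∃ u v, G.Adj u v ∧ (locRes G u v).card = k}

/-- The closed neighborhood `N[u]`. -/
def closedNbhd {V : Type*} (G : SimpleGraph V) (u : V) : Set V :=
  insert u (G.neighborSet u)

/-- `u` and `v` are true twins: distinct vertices with `N[u] = N[v]`. -/
def TrueTwins {V : Type*} (G : SimpleGraph V) (u v : V) : Prop :=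
  u ≠ v ∧ closedNbhd G u = closedNbhd G v

end FracLocal

/-!
True twins `u, v` of a connected graph are at equal distance from every other vertex (a shortest
path leaving `u` can be rerouted through `v`), so `L(uv) = {u, v}` and every local resolving
function satisfies `f u + f v ≥ 1`. In a twin class at most one vertex then weighs less than `1/2`,
and a twin of it makes up the deficit.
-/

namespace FracLocal

variable {V : Type*}

theorem TrueTwins.adj {G : SimpleGraph V} {u v : V} (h : TrueTwins G u v) : G.Adj u v := by
  have hv : v ∈ closedNbhd G u := h.2 ▸ Set.mem_insert v _
  exact hv.resolve_left (Ne.symm h.1)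

theorem dist_le_of_closedNbhd_eq {G : SimpleGraph V} (hconn : G.Connected) {u v x : V}
    (hN : closedNbhd G u = closedNbhd G v) (hux : u ≠ x) : G.dist v x ≤ G.dist u x := by
  obtain ⟨p, hp⟩ := hconn.exists_walk_length_eq_dist u x
  cases p with
  | nil => exact absurd rfl hux
  | @cons _ w _ huw q =>
    have hw : w ∈ closedNbhd G v := hN ▸ Set.mem_insert_of_mem u huw
    rw [← hp, SimpleGraph.Walk.length_cons]
    rcases hw with rfl | hvw
    · exact (SimpleGraph.dist_le q).trans (Nat.le_succ _)
    · exact SimpleGraph.dist_le (.cons hvw q)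

theorem dist_eq_of_closedNbhd_eq {G : SimpleGraph V} (hconn : G.Connected) {u v x : V}
    (hN : closedNbhd G u = closedNbhd G v) (hxu : x ≠ u) (hxv : x ≠ v) :
    G.dist x u = G.dist x v := by
  rw [SimpleGraph.dist_comm, G.dist_comm (u := x)]
  exact le_antisymm (dist_le_of_closedNbhd_eq hconn hN.symm (Ne.symm hxv))
    (dist_le_of_closedNbhd_eq hconn hN (Ne.symm hxu))

variable [Fintype V]

theorem locRes_subset_of_trueTwins {G : SimpleGraph V} (hconn : G.Connected) {u v : V}
    (h : TrueTwins G u v) : locRes G u v ⊆ {u, v} := by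
  intro x hx
  simp only [locRes, Finset.mem_filter, Finset.mem_univ, true_and] at hx
  by_contra hxuv
  simp only [Finset.mem_insert, Finset.mem_singleton, not_or] at hxuv
  exact hx (dist_eq_of_closedNbhd_eq hconn h.2 hxuv.1 hxuv.2)

theorem IsLRF.one_le_add_of_trueTwins {G : SimpleGraph V} (hconn : G.Connected) {f : V → ℝ}
    (hf : IsLRF G f) {u v : V} (h : TrueTwins G u v) : 1 ≤ f u + f v :=
  calc 1 ≤ ∑ x ∈ locRes G u v, f x := hf.2 u v h.adj
    _ ≤ ∑ x ∈ {u, v}, f x :=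
      Finset.sum_le_sum_of_subset_of_nonneg (locRes_subset_of_trueTwins hconn h)
        fun x _ _ => (hf.1 x).1
    _ = f u + f v := Finset.sum_pair h.1

theorem isLRF_one (G : SimpleGraph V) : IsLRF G 1 := by
  refine ⟨fun _ => ⟨zero_le_one, le_rfl⟩, fun u v huv => ?_⟩
  have hu : u ∈ locRes G u v := by
    simp [locRes, SimpleGraph.dist_eq_one_iff_adj.mpr huv]
  simpa using Finset.sum_le_sum_of_subset_of_nonneg (Finset.singleton_subset_iff.mpr hu)
    (f := (1 : V → ℝ)) fun _ _ _ => zero_le_one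

end FracLocal

/-- Each `u` with `h u < 0` is sent to a partner `t u` in its fiber; then `h (t u) > 0`, and `t` is
injective on such `u` because two of them in one fiber would violate the pair bound. -/
theorem sum_nonneg_of_add_nonneg_on_fibers {α β : Type*} [Fintype α] (N : α → β) (h : α → ℝ)
    (hpartner : ∀ u, ∃ v, u ≠ v ∧ N u = N v)
    (hpair : ∀ u v, u ≠ v → N u = N v → 0 ≤ h u + h v) :
    0 ≤ ∑ u, h u := by
  classical
  choose t ht_ne ht_eq using hpartner
  set neg := Finset.univ.filter fun u => h u < 0
  have ht_inj : Set.InjOn t neg := by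
    intro u hu u' hu' htu
    simp only [neg, Finset.mem_coe, Finset.mem_filter, Finset.mem_univ, true_and] at hu hu'
    by_contra hne
    have := hpair u u' hne ((ht_eq u).trans (htu ▸ (ht_eq u').symm))
    linarith
  have himage : neg.image t ⊆ Finset.univ.filter fun u => ¬ h u < 0 := by
    intro w hw
    obtain ⟨u, hu, rfl⟩ := Finset.mem_image.mp hw
    have := hpair u (t u) (ht_ne u) (ht_eq u)
    simp only [neg, Finset.mem_filter, Finset.mem_univ, true_and] at hu ⊢
    linarith
  have hneg : 0 ≤ ∑ u ∈ neg, h u + ∑ u ∈ neg.image t, h u := by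
    rw [Finset.sum_image ht_inj, ← Finset.sum_add_distrib]
    exact Finset.sum_nonneg fun u _ => hpair u (t u) (ht_ne u) (ht_eq u)
  have hnonneg : ∑ u ∈ neg.image t, h u ≤ ∑ u ∈ Finset.univ.filter (fun u => ¬ h u < 0), h u :=
    Finset.sum_le_sum_of_subset_of_nonneg himage fun u hu _ => by simpa using hu
  rw [← Finset.sum_filter_add_sum_filter_not Finset.univ (fun u => h u < 0)]
  linarith

theorem card_div_two_le_sum_of_one_le_add_on_fibers {α β : Type*} [Fintype α] (N : α → β)
    (f : α → ℝ) (hpartner : ∀ u, ∃ v, u ≠ v ∧ N u = N v)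
    (hpair : ∀ u v, u ≠ v → N u = N v → 1 ≤ f u + f v) :
    (Fintype.card α : ℝ) / 2 ≤ ∑ u, f u := by
  have := sum_nonneg_of_add_nonneg_on_fibers N (fun u => f u - 1 / 2) hpartner
    fun u v huv hN => by linarith [hpair u v huv hN]
  simp only [Finset.sum_sub_distrib, Finset.sum_const, Finset.card_univ, nsmul_eq_mul] at this
  linarith

open FracLocal in
theorem stmt_4_general {V : Type*} [Fintype V] (G : SimpleGraph V)
    (hconn : G.Connected)
    (h : ∀ u : V, ∃ v : V, TrueTwins G u v) :
    (Fintype.card V : ℝ) / 2 ≤ ldimf G := by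
  refine le_csInf ⟨_, 1, isLRF_one G, rfl⟩ ?_
  rintro _ ⟨f, hf, rfl⟩
  exact card_div_two_le_sum_of_one_le_add_on_fibers (closedNbhd G) f h
    fun u v huv hN => hf.one_le_add_of_trueTwins hconn ⟨huv, hN⟩

open FracLocal in
/-- If every vertex of a connected graph `G` of order `n ≥ 2` has a
true twin, then `ldim_f(G) ≥ n/2`. -/
theorem stmt_4 {V : Type*} [Fintype V] (G : SimpleGraph V)
    (hconn : G.Connected) (hn : 2 ≤ Fintype.card V)
    (h : ∀ u : V, ∃ v : V, TrueTwins G u v) :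
    (Fintype.card V : ℝ) / 2 ≤ ldimf G :=
  stmt_4_general G hconn h
end

section
/- If G₁ and G₂ are connected graphs with ldim_f(G₁) = |V(G₁)|/2 and ldim_f(G₂) = |V(G₂)|/2, then their join satisfies ldim_f(G₁ + G₂) = |V(G₁+G₂)|/2. -/
/-!
The constant function `1/2` is always a local resolving function, so `ldim_f(G) ≤ |V|/2`.
If `u` and `v` are true twins, every other vertex is equidistant from them, so `L(uv) = {u, v}`
and any local resolving function has `f u + f v ≥ 1`; pairing each vertex of weight `< 1/2` with a
twin shows that the weight is at least `|V|/2` once every vertex has a twin. Conversely, if `u` has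
no twin, then every edge has two resolving vertices other than `u`, so moving the weight of `u` to
`0` in the constant `1/2` function still resolves every edge and `ldim_f(G) ≤ (|V| - 1)/2`. Finally,
true twins of `G₁` or `G₂` remain true twins in the join `G₁ + G₂`.
-/

open scoped Classical
open Finset

namespace FracLocal
/-- The join of two graphs: disjoint union plus all edges across. -/
def joinGraph {α β : Type*} (G : SimpleGraph α) (H : SimpleGraph β) :
    SimpleGraph (α ⊕ β) where
  Adj x y :=
    match x, y with
    | .inl a, .inl b => G.Adj a b
    | .inr a, .inr b => H.Adj a b
    | .inl _, .inr _ => True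
    | .inr _, .inl _ => True
  symm := ⟨by rintro (a|a) (b|b) h <;> first | exact h.symm | trivial⟩
  loopless := ⟨by rintro (a|a) h <;> first | exact G.irrefl h | exact H.irrefl h⟩
end FracLocal

namespace FracLocal

section Sums

variable {ι M : Type*}

lemma add_le_sum_of_mem [AddCommMonoid M] [PartialOrder M] [IsOrderedAddMonoid M]
    {s : Finset ι} {f : ι → M} (hf : ∀ i ∈ s, 0 ≤ f i) {a b : ι} (ha : a ∈ s) (hb : b ∈ s)
    (hab : a ≠ b) : f a + f b ≤ ∑ i ∈ s, f i := by
  rw [← sum_pair hab]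
  exact sum_le_sum_of_subset_of_nonneg (by simp [insert_subset_iff, ha, hb])
    fun i hi _ => hf i hi

/-- The negative values of `g` are paid for by the values at their partners `t x`, which are
positive and, by injectivity, used only once. -/
lemma sum_nonneg_of_pairing [Fintype ι] [AddCommGroup M] [LinearOrder M] [IsOrderedAddMonoid M]
    {g : ι → M} (t : ι → ι) (ht : ∀ x, 0 ≤ g x + g (t x))
    (hinj : ∀ x y, g x < 0 → g y < 0 → t x = t y → x = y) : 0 ≤ ∑ x, g x := by
  set S := univ.filter (g · < 0)
  have hS : ∀ {x}, x ∈ S ↔ g x < 0 := by simp [S]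
  have hinjOn : Set.InjOn t S := fun x hx y hy => hinj x y (hS.1 hx) (hS.1 hy)
  have hdisj : Disjoint S (S.image t) := by
    refine disjoint_left.2 fun a haS haT => ?_
    obtain ⟨x, hxS, rfl⟩ := mem_image.1 haT
    exact (ht x).not_gt (add_neg (hS.1 hxS) (hS.1 haS))
  calc 0 ≤ ∑ x ∈ S, (g x + g (t x)) := sum_nonneg fun x _ => ht x
    _ = ∑ x ∈ S ∪ S.image t, g x := by
      rw [sum_union hdisj, sum_image hinjOn, sum_add_distrib]
    _ ≤ ∑ x, g x := sum_le_sum_of_subset_of_nonneg (subset_univ _)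
      fun x _ hx => not_lt.1 fun h => hx (mem_union_left _ (hS.2 h))

end Sums

variable {V : Type*} {G : SimpleGraph V} {u v w z : V}

lemma mem_closedNbhd : w ∈ closedNbhd G u ↔ w = u ∨ G.Adj u w := Iff.rfl

lemma dist_le_of_neighborSet_subset_closedNbhd (h : G.neighborSet u ⊆ closedNbhd G v)
    (hz : u ≠ z) (hr : G.Reachable u z) : G.dist v z ≤ G.dist u z := by
  obtain ⟨p, hp⟩ := hr.exists_walk_length_eq_dist
  cases p with
  | nil => exact absurd rfl hz
  | cons hadj q =>
    rw [← hp, SimpleGraph.Walk.length_cons]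
    rcases mem_closedNbhd.1 (h hadj) with rfl | hvw
    · exact (SimpleGraph.dist_le q).trans (Nat.le_succ _)
    · exact SimpleGraph.dist_le (.cons hvw q)

namespace TrueTwins

lemma adj_s5 (h : TrueTwins G u v) : G.Adj u v := by
  obtain ⟨hne, hN⟩ := h
  have hu : u ∈ closedNbhd G v := hN ▸ Set.mem_insert u _
  exact (mem_closedNbhd.1 hu).resolve_left hne |>.symm

lemma dist_le (h : TrueTwins G u v) (hz : u ≠ z) (hr : G.Reachable u z) :
    G.dist v z ≤ G.dist u z :=
  dist_le_of_neighborSet_subset_closedNbhd (h.2 ▸ Set.subset_insert _ _) hz hr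

lemma symm (h : TrueTwins G u v) : TrueTwins G v u := ⟨h.1.symm, h.2.symm⟩

lemma dist_eq (h : TrueTwins G u v) (hzu : z ≠ u) (hzv : z ≠ v) : G.dist z u = G.dist z v := by
  rw [SimpleGraph.dist_comm, SimpleGraph.dist_comm (u := z)]
  by_cases hr : G.Reachable u z
  · have hr' : G.Reachable v z := h.adj_s5.symm.reachable.trans hr
    exact le_antisymm (h.symm.dist_le hzv.symm hr') (h.dist_le hzu.symm hr)
  · have hr' : ¬ G.Reachable v z := fun h' => hr (h.adj_s5.reachable.trans h')
    rw [SimpleGraph.dist_eq_zero_of_not_reachable hr, SimpleGraph.dist_eq_zero_of_not_reachable hr']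

end TrueTwins

section Finite

variable [Fintype V]

lemma mem_locRes : z ∈ locRes G u v ↔ G.dist z u ≠ G.dist z v := by simp [locRes]

lemma locRes_comm (G : SimpleGraph V) (u v : V) : locRes G u v = locRes G v u := by
  ext x
  simp only [mem_locRes, ne_comm]

lemma left_mem_locRes (h : G.Adj u v) : u ∈ locRes G u v := by
  rw [mem_locRes, SimpleGraph.dist_self, SimpleGraph.dist_eq_one_iff_adj.2 h]
  exact zero_ne_one

lemma right_mem_locRes (h : G.Adj u v) : v ∈ locRes G u v :=
  locRes_comm G v u ▸ left_mem_locRes h.symm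

lemma TrueTwins.locRes_eq (h : TrueTwins G u v) : locRes G u v = {u, v} := by
  ext x
  simp only [mem_insert, mem_singleton]
  refine ⟨fun hx => ?_, ?_⟩
  · by_contra! hxuv
    exact mem_locRes.1 hx (h.dist_eq hxuv.1 hxuv.2)
  · rintro (rfl | rfl)
    exacts [left_mem_locRes h.adj_s5, right_mem_locRes h.adj_s5]

lemma exists_mem_locRes_of_not_trueTwins (huw : G.Adj u w) (h : ¬ TrueTwins G u w) :
    ∃ x ∈ locRes G u w, x ≠ u ∧ x ≠ w := by
  by_contra! hx
  refine h ⟨huw.ne, Set.ext fun x => ?_⟩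
  simp only [mem_closedNbhd]
  by_cases hxu : x = u
  · simp [hxu, huw.symm]
  by_cases hxw : x = w
  · simp [hxw, huw]
  have hdist : G.dist x u = G.dist x w := by
    by_contra hne
    exact hxw (hx x (mem_locRes.2 hne) hxu)
  rw [← SimpleGraph.dist_eq_one_iff_adj, ← SimpleGraph.dist_eq_one_iff_adj,
    SimpleGraph.dist_comm, hdist, SimpleGraph.dist_comm]
  simp [hxu, hxw]

lemma exists_pair_mem_locRes_of_forall_not_trueTwins (hno : ∀ w, ¬ TrueTwins G u w)
    (hvw : G.Adj v w) : ∃ a ∈ locRes G v w, ∃ b ∈ locRes G v w, a ≠ b ∧ a ≠ u ∧ b ≠ u := by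
  by_cases hv : v = u
  · subst hv
    obtain ⟨x, hx, hxv, hxw⟩ := exists_mem_locRes_of_not_trueTwins hvw (hno w)
    exact ⟨x, hx, w, right_mem_locRes hvw, hxw, hxv, hvw.ne.symm⟩
  by_cases hw : w = u
  · subst hw
    obtain ⟨x, hx, hxw, hxv⟩ := exists_mem_locRes_of_not_trueTwins hvw.symm (hno v)
    rw [locRes_comm] at hx
    exact ⟨x, hx, v, left_mem_locRes hvw, hxv, hxw, hv⟩
  exact ⟨v, left_mem_locRes hvw, w, right_mem_locRes hvw, hvw.ne, hv, hw⟩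

lemma ldimf_le_of_isLRF {f : V → ℝ} (hf : IsLRF G f) : ldimf G ≤ ∑ x, f x :=
  csInf_le ⟨0, by rintro _ ⟨g, hg, rfl⟩; exact sum_nonneg fun x _ => (hg.1 x).1⟩ ⟨f, hf, rfl⟩

lemma isLRF_const_half (G : SimpleGraph V) : IsLRF G fun _ => (1 / 2 : ℝ) := by
  refine ⟨fun _ => by norm_num, fun u v huv => ?_⟩
  calc (1 : ℝ) = 1 / 2 + 1 / 2 := by norm_num
    _ ≤ _ := add_le_sum_of_mem (f := fun _ => (1 / 2 : ℝ)) (fun _ _ => by norm_num)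
      (left_mem_locRes huv) (right_mem_locRes huv) huv.ne

lemma ldimf_le_card_div_two (G : SimpleGraph V) : ldimf G ≤ Fintype.card V / 2 :=
  (ldimf_le_of_isLRF (isLRF_const_half G)).trans_eq <| by simp [div_eq_mul_inv]

lemma le_ldimf {c : ℝ} (h : ∀ f, IsLRF G f → c ≤ ∑ x, f x) : c ≤ ldimf G :=
  le_csInf ⟨_, _, isLRF_const_half G, rfl⟩ fun _ ⟨f, hf, hw⟩ => hw ▸ h f hf

lemma TrueTwins.one_le_add {f : V → ℝ} (hf : IsLRF G f) (h : TrueTwins G u v) :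
    1 ≤ f u + f v := by
  simpa [h.locRes_eq, sum_pair h.1] using hf.2 u v h.adj_s5

lemma card_div_two_le_sum_of_isLRF (htw : ∀ x, ∃ y, TrueTwins G x y) {f : V → ℝ}
    (hf : IsLRF G f) : Fintype.card V / 2 ≤ ∑ x, f x := by
  choose t ht using htw
  have hpair : 0 ≤ ∑ x, (f x - 1 / 2) := by
    refine sum_nonneg_of_pairing t (fun x => by linarith [(ht x).one_le_add hf])
      fun x y hx hy hxy => ?_
    by_contra hne
    have := TrueTwins.one_le_add hf ⟨hne, (ht x).2.trans (hxy ▸ (ht y).2.symm)⟩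
    linarith
  simpa [sum_sub_distrib, div_eq_mul_inv] using hpair

lemma card_div_two_le_ldimf (htw : ∀ x, ∃ y, TrueTwins G x y) :
    Fintype.card V / 2 ≤ ldimf G :=
  le_ldimf fun _ => card_div_two_le_sum_of_isLRF htw

lemma ldimf_le_of_forall_not_trueTwins (hno : ∀ w, ¬ TrueTwins G u w) :
    ldimf G ≤ (Fintype.card V - 1) / 2 := by
  set f : V → ℝ := fun x => if x = u then 0 else 1 / 2
  have hf : IsLRF G f := by
    refine ⟨fun x => by by_cases hx : x = u <;> norm_num [f, hx], fun v w hvw => ?_⟩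
    obtain ⟨a, ha, b, hb, hab, hau, hbu⟩ := exists_pair_mem_locRes_of_forall_not_trueTwins hno hvw
    calc (1 : ℝ) = f a + f b := by norm_num [f, hau, hbu]
      _ ≤ _ := add_le_sum_of_mem (fun x _ => by by_cases hx : x = u <;> norm_num [f, hx])
        ha hb hab
  have hsum : ∑ x, f x = (Fintype.card V - 1) / 2 := by
    have hsplit : ∀ x, f x = 1 / 2 - if x = u then 1 / 2 else 0 := fun x => by
      by_cases hx : x = u <;> simp [f, hx]
    simp only [hsplit, sum_sub_distrib, sum_ite_eq', mem_univ, if_true, sum_const, card_univ,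
      nsmul_eq_mul]
    ring
  exact hsum ▸ ldimf_le_of_isLRF hf

lemma exists_trueTwins_of_ldimf_eq (hd : ldimf G = Fintype.card V / 2) (u : V) :
    ∃ v, TrueTwins G u v := by
  by_contra! hno
  linarith [ldimf_le_of_forall_not_trueTwins hno]

end Finite

section Join

variable {V₁ V₂ : Type*} {G₁ : SimpleGraph V₁} {G₂ : SimpleGraph V₂}

lemma closedNbhd_joinGraph_inl (u : V₁) :
    closedNbhd (joinGraph G₁ G₂) (.inl u) = Sum.inl '' closedNbhd G₁ u ∪ Set.range Sum.inr := by
  ext (x | x) <;> simp [mem_closedNbhd, joinGraph]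

lemma closedNbhd_joinGraph_inr (u : V₂) :
    closedNbhd (joinGraph G₁ G₂) (.inr u) = Set.range Sum.inl ∪ Sum.inr '' closedNbhd G₂ u := by
  ext (x | x) <;> simp [mem_closedNbhd, joinGraph]

lemma TrueTwins.joinGraph_inl {u v : V₁} (h : TrueTwins G₁ u v) :
    TrueTwins (joinGraph G₁ G₂) (.inl u) (.inl v) :=
  ⟨Sum.inl_injective.ne h.1, by rw [closedNbhd_joinGraph_inl, closedNbhd_joinGraph_inl, h.2]⟩

lemma TrueTwins.joinGraph_inr {u v : V₂} (h : TrueTwins G₂ u v) :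
    TrueTwins (joinGraph G₁ G₂) (.inr u) (.inr v) :=
  ⟨Sum.inr_injective.ne h.1, by rw [closedNbhd_joinGraph_inr, closedNbhd_joinGraph_inr, h.2]⟩

end Join

end FracLocal

open FracLocal in
theorem stmt_5_general {V₁ V₂ : Type*} [Fintype V₁] [Fintype V₂]
    (G₁ : SimpleGraph V₁) (G₂ : SimpleGraph V₂)
    (h₁ : ldimf G₁ = (Fintype.card V₁ : ℝ) / 2)
    (h₂ : ldimf G₂ = (Fintype.card V₂ : ℝ) / 2) :
    ldimf (joinGraph G₁ G₂) = (Fintype.card (V₁ ⊕ V₂) : ℝ) / 2 := by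
  have htw : ∀ x, ∃ y, TrueTwins (joinGraph G₁ G₂) x y := by
    rintro (a | a)
    · obtain ⟨b, hb⟩ := exists_trueTwins_of_ldimf_eq h₁ a
      exact ⟨_, hb.joinGraph_inl⟩
    · obtain ⟨b, hb⟩ := exists_trueTwins_of_ldimf_eq h₂ a
      exact ⟨_, hb.joinGraph_inr⟩
  exact le_antisymm (ldimf_le_card_div_two _) (card_div_two_le_ldimf htw)

open FracLocal in
/-- If connected graphs `G₁`, `G₂` satisfy `ldim_f(Gᵢ) = |V(Gᵢ)|/2`,
then their join satisfies `ldim_f(G₁ + G₂) = |V(G₁ + G₂)|/2`. -/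
theorem stmt_5 {V₁ V₂ : Type*} [Fintype V₁] [Fintype V₂]
    (G₁ : SimpleGraph V₁) (G₂ : SimpleGraph V₂)
    (h₁c : G₁.Connected) (h₂c : G₂.Connected)
    (h₁ : ldimf G₁ = (Fintype.card V₁ : ℝ) / 2)
    (h₂ : ldimf G₂ = (Fintype.card V₂ : ℝ) / 2) :
    ldimf (joinGraph G₁ G₂) = (Fintype.card (V₁ ⊕ V₂) : ℝ) / 2 :=
  stmt_5_general G₁ G₂ h₁ h₂
end
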